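/- arXiv:1002.0162 — 7 statements merged into one kernel-verified Lean document; each statement's English description precedes it below -/
import Mathlib

section
/- Suppose L̃ + θ: TM̃ → ℝ satisfies f₁|v|² + f₂ ≥ (L̃+θ)(q,v) ≥ e₁|v|² − e₂ and the energy satisfies Ẽ(q,v) ≥ g₁|v|² − g₂ for positive constants e₁,e₂,f₁,f₂,g₁,g₂. Then for any W^{1,2} loop q: S¹ → M̃ lifted to γ:[0,T] → M̃ with γ(t) = q(t/T), the partial derivative of the free time action functional with respect to T satisfies ∂S/∂T(q,T) ≤ (g₁f₂/f₁) + g₂ + (1 + g₁/f₁)k − (g₁/(f₁T)) 𝕊_{L̃+θ+k}(q,T), where ∂S/∂T(q,T) = (1/T) ∫₀^T (k − Ẽ(γ,γ̇)) dt and 𝕊_{L̃+θ+k}(q,T) = T ∫₀¹ (L̃(q, q̇/T) + (1/T)θ_q(q̇) + k)dt. -/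
open MeasureTheory

/-!
Substituting `t = T s` turns `∂S/∂T(q,T)` into `k − ∫₀¹ Ẽ(q, q̇/T)`.  Pointwise, the upper bound
on `L̃ + θ` and the lower bound on `Ẽ` at the same velocity `q̇/T` eliminate `|q̇/T|²`:
`(g₁/f₁)(L̃ + θ) ≤ Ẽ + g₁f₂/f₁ + g₂`.  Integrating over `[0,1]` and using
`θ_q(q̇/T) = (1/T) θ_q(q̇)` gives the claim, since `(g₁/(f₁T)) 𝕊 = (g₁/f₁) ∫₀¹ (L̃ + θ + k)`.
-/

section Rescaling

variable {E : Type*} [NormedAddCommGroup E] {f : ℝ → E} {T : ℝ}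

theorem IntervalIntegrable.of_comp_div_self (hT : T ≠ 0)
    (hf : IntervalIntegrable (fun t => f (t / T)) volume 0 T) :
    IntervalIntegrable f volume 0 1 := by
  simpa [hT] using hf.comp_mul_right (c := T)

theorem intervalIntegral.inv_smul_integral_comp_div_self [NormedSpace ℝ E] (hT : T ≠ 0) :
    T⁻¹ • ∫ t in (0:ℝ)..T, f (t / T) = ∫ t in (0:ℝ)..1, f t := by
  simp [intervalIntegral.integral_comp_div f hT, hT]

end Rescaling

theorem div_mul_le_add_of_le_quadratic_of_quadratic_le {a e r f₁ f₂ g₁ g₂ : ℝ}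
    (hf₁ : 0 < f₁) (hg₁ : 0 ≤ g₁) (ha : a ≤ f₁ * r + f₂) (he : g₁ * r - g₂ ≤ e) :
    g₁ / f₁ * a ≤ e + (g₁ * f₂ / f₁ + g₂) := by
  calc g₁ / f₁ * a ≤ g₁ / f₁ * (f₁ * r + f₂) := by gcongr
    _ = g₁ * r + g₁ * f₂ / f₁ := by field_simp
    _ ≤ e + (g₁ * f₂ / f₁ + g₂) := by linarith

theorem integral_unitInterval_sub_le_of_mul_le {a e : ℝ → ℝ} {c k r : ℝ}
    (ha : IntervalIntegrable a volume 0 1) (he : IntervalIntegrable e volume 0 1)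
    (hae : ∀ t ∈ Set.Icc (0:ℝ) 1, r * a t ≤ e t + c) :
    ∫ t in (0:ℝ)..1, (k - e t) ≤ c + k - r * ∫ t in (0:ℝ)..1, a t := by
  have hmono := intervalIntegral.integral_mono_on zero_le_one (ha.const_mul r)
    (he.add intervalIntegrable_const) hae
  rw [intervalIntegral.integral_const_mul, intervalIntegral.integral_add he intervalIntegrable_const]
    at hmono
  rw [intervalIntegral.integral_sub intervalIntegrable_const he]
  simp only [intervalIntegral.integral_const, sub_zero, one_smul] at hmono ⊢
  linarith

theorem free_time_action_T_derivative_bound_general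
    {X F : Type*} [NormedAddCommGroup F] [NormedSpace ℝ F]
    (L : X → F → ℝ) (Th : X → F →L[ℝ] ℝ) (En : X → F → ℝ)
    (f₁ f₂ g₁ g₂ : ℝ)
    (hf₁ : 0 < f₁) (hg₁ : 0 < g₁)
    (hupper : ∀ q v, L q v + Th q v ≤ f₁ * ‖v‖ ^ 2 + f₂)
    (hEn : ∀ q v, g₁ * ‖v‖ ^ 2 - g₂ ≤ En q v)
    (k : ℝ) (q : ℝ → X) (v : ℝ → F)
    (T : ℝ) (hT : 0 < T)
    (hint₁ : IntervalIntegrable (fun t => En (q (t / T)) (T⁻¹ • v (t / T))) volume 0 T)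
    (hint₂ : IntervalIntegrable
        (fun t => L (q t) (T⁻¹ • v t) + T⁻¹ * Th (q t) (v t) + k) volume 0 1) :
    (1 / T) * ∫ t in (0:ℝ)..T, (k - En (q (t / T)) (T⁻¹ • v (t / T)))
      ≤ g₁ * f₂ / f₁ + g₂ + (1 + g₁ / f₁) * k
        - g₁ / (f₁ * T) *
            (T * ∫ t in (0:ℝ)..1, (L (q t) (T⁻¹ • v t) + T⁻¹ * Th (q t) (v t) + k)) := by
  have hrescale : (1 / T) * ∫ t in (0:ℝ)..T, (k - En (q (t / T)) (T⁻¹ • v (t / T)))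
      = ∫ t in (0:ℝ)..1, (k - En (q t) (T⁻¹ • v t)) := by
    rw [one_div, ← smul_eq_mul]
    exact intervalIntegral.inv_smul_integral_comp_div_self (f := fun s => k - En (q s) (T⁻¹ • v s))
      hT.ne'
  have hpointwise : ∀ t ∈ Set.Icc (0:ℝ) 1,
      g₁ / f₁ * (L (q t) (T⁻¹ • v t) + T⁻¹ * Th (q t) (v t) + k)
        ≤ En (q t) (T⁻¹ • v t) + (g₁ * f₂ / f₁ + g₂ + g₁ / f₁ * k) := by
    intro t _
    have hTh : Th (q t) (T⁻¹ • v t) = T⁻¹ * Th (q t) (v t) := by simp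
    have := div_mul_le_add_of_le_quadratic_of_quadratic_le hf₁ hg₁.le
      (hTh ▸ hupper (q t) (T⁻¹ • v t)) (hEn (q t) (T⁻¹ • v t))
    linarith
  have hS : g₁ / (f₁ * T) * (T * ∫ t in (0:ℝ)..1,
      (L (q t) (T⁻¹ • v t) + T⁻¹ * Th (q t) (v t) + k))
      = g₁ / f₁ * ∫ t in (0:ℝ)..1, (L (q t) (T⁻¹ • v t) + T⁻¹ * Th (q t) (v t) + k) := by
    field_simp
  rw [hrescale, hS]
  have := integral_unitInterval_sub_le_of_mul_le (k := k) hint₂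
    (hint₁.of_comp_div_self hT.ne') hpointwise
  linarith

theorem free_time_action_T_derivative_bound
    {X F : Type*} [NormedAddCommGroup F] [NormedSpace ℝ F]
    (L : X → F → ℝ) (Th : X → F →L[ℝ] ℝ) (En : X → F → ℝ)
    (e₁ e₂ f₁ f₂ g₁ g₂ : ℝ)
    (he₁ : 0 < e₁) (he₂ : 0 < e₂) (hf₁ : 0 < f₁) (hf₂ : 0 < f₂) (hg₁ : 0 < g₁) (hg₂ : 0 < g₂)
    (hupper : ∀ q v, L q v + Th q v ≤ f₁ * ‖v‖ ^ 2 + f₂)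
    (hlower : ∀ q v, e₁ * ‖v‖ ^ 2 - e₂ ≤ L q v + Th q v)
    (hEn : ∀ q v, g₁ * ‖v‖ ^ 2 - g₂ ≤ En q v)
    (k : ℝ) (q : ℝ → X) (v : ℝ → F) (hq : Function.Periodic q 1) (hv : Function.Periodic v 1)
    (T : ℝ) (hT : 0 < T)
    (hint₁ : IntervalIntegrable (fun t => En (q (t / T)) (T⁻¹ • v (t / T))) volume 0 T)
    (hint₂ : IntervalIntegrable
        (fun t => L (q t) (T⁻¹ • v t) + T⁻¹ * Th (q t) (v t) + k) volume 0 1) :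
    (1 / T) * ∫ t in (0:ℝ)..T, (k - En (q (t / T)) (T⁻¹ • v (t / T)))
      ≤ g₁ * f₂ / f₁ + g₂ + (1 + g₁ / f₁) * k
        - g₁ / (f₁ * T) *
            (T * ∫ t in (0:ℝ)..1, (L (q t) (T⁻¹ • v t) + T⁻¹ * Th (q t) (v t) + k)) :=
  free_time_action_T_derivative_bound_general L Th En f₁ f₂ g₁ g₂ hf₁ hg₁ hupper hEn k q v T hT
    hint₁ hint₂
end

section
/- There exists a constant h₀ > 0 such that for every contractible W^{1,2} loop q: S¹ → M and every T > 0, if S_{L+k}(q,T) > h₀ T then ∂S_{L+k}/∂T(q,T) < 0. -/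
open MeasureTheory

/-!
STATEMENT 4: There exists a constant `h₀ > 0` such that for every contractible `W^{1,2}` loop
`q : S¹ → M` and every `T > 0`: if `S_{L+k}(q,T) > h₀ T` then `∂S_{L+k}/∂T (q,T) < 0`.

On the contractible component the free time action functional equals (via a lift to the
universal cover and a bounded primitive `θ` of the lifted magnetic form) the functional
`S_{L+k}(q,T) = T ∫₀¹ (L(q, q̇/T) + (1/T) θ_q(q̇) + k) dt`, and its partial derivative in the
period is `∂S_{L+k}/∂T (q,T) = ∫₀¹ (k − Ẽ(q, q̇/T)) dt`, where `Ẽ` is the energy of the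
Lagrangian.  We model the universal cover by a type `X` with trivialized tangent spaces a normed
space `F`; loops are 1-periodic maps `q : ℝ → X` with velocity data `v : ℝ → F`.  The standing
growth assumptions `(L̃+θ)(q,v) ≤ f₁|v|² + f₂` and `Ẽ(q,v) ≥ g₁|v|² − g₂` hold for positive
constants, as in the paper (these follow from `‖θ‖_∞ < ∞`).
-/
theorem exists_h0_derivative_neg
    {X F : Type*} [NormedAddCommGroup F] [NormedSpace ℝ F]
    (L : X → F → ℝ) (Th : X → F →L[ℝ] ℝ) (En : X → F → ℝ)
    (f₁ f₂ g₁ g₂ : ℝ) (hf₁ : 0 < f₁) (hf₂ : 0 < f₂) (hg₁ : 0 < g₁) (hg₂ : 0 < g₂)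
    (hupper : ∀ q v, L q v + Th q v ≤ f₁ * ‖v‖ ^ 2 + f₂)
    (hEn : ∀ q v, g₁ * ‖v‖ ^ 2 - g₂ ≤ En q v) (k : ℝ) :
    ∃ h₀ > (0:ℝ), ∀ (q : ℝ → X) (v : ℝ → F),
      Function.Periodic q 1 → Function.Periodic v 1 →
      (∀ T > (0:ℝ), IntervalIntegrable
          (fun t => L (q t) (T⁻¹ • v t) + T⁻¹ * Th (q t) (v t) + k) volume 0 1) →
      (∀ T > (0:ℝ), IntervalIntegrable (fun t => En (q t) (T⁻¹ • v t)) volume 0 1) →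
      IntervalIntegrable (fun t => ‖v t‖ ^ 2) volume 0 1 →
      ∀ T, 0 < T →
      h₀ * T < T * ∫ t in (0:ℝ)..1, (L (q t) (T⁻¹ • v t) + T⁻¹ * Th (q t) (v t) + k) →
      (∫ t in (0:ℝ)..1, (k - En (q t) (T⁻¹ • v t))) < 0 := by
  refine ⟨|k| + f₂ + f₁ * ((|k| + g₂ + 1) / g₁), by positivity, ?_⟩
  intro q v hq hv hint hEint hv2 T hT hS
  have hTi : (0:ℝ) < T⁻¹ := inv_pos.2 hT
  set A := ∫ t in (0:ℝ)..1, ‖v t‖ ^ 2 with hA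
  have hnorm : ∀ t : ℝ, ‖T⁻¹ • v t‖ ^ 2 = T⁻¹ ^ 2 * ‖v t‖ ^ 2 := by
    intro t
    rw [norm_smul, Real.norm_eq_abs, abs_of_pos hTi, mul_pow]
  -- Step 1: h₀ < integral
  have h1 : |k| + f₂ + f₁ * ((|k| + g₂ + 1) / g₁)
      < ∫ t in (0:ℝ)..1, (L (q t) (T⁻¹ • v t) + T⁻¹ * Th (q t) (v t) + k) := by
    have := hS
    rw [mul_comm (|k| + f₂ + f₁ * ((|k| + g₂ + 1) / g₁)) T] at this
    exact lt_of_mul_lt_mul_left this hT.le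
  -- Step 2: integral upper bound
  have hub : (∫ t in (0:ℝ)..1, (L (q t) (T⁻¹ • v t) + T⁻¹ * Th (q t) (v t) + k))
      ≤ f₁ * (T⁻¹ ^ 2 * A) + f₂ + k := by
    have hrhs : IntervalIntegrable
        (fun t => f₁ * (T⁻¹ ^ 2 * ‖v t‖ ^ 2) + f₂ + k) volume 0 1 :=
      (((hv2.const_mul (T⁻¹ ^ 2)).const_mul f₁).add intervalIntegrable_const).add
        intervalIntegrable_const
    have hmono : (∫ t in (0:ℝ)..1, (L (q t) (T⁻¹ • v t) + T⁻¹ * Th (q t) (v t) + k))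
        ≤ ∫ t in (0:ℝ)..1, (f₁ * (T⁻¹ ^ 2 * ‖v t‖ ^ 2) + f₂ + k) := by
      apply intervalIntegral.integral_mono_on (by norm_num) (hint T hT) hrhs
      intro t _
      have h := hupper (q t) (T⁻¹ • v t)
      have hth : Th (q t) (T⁻¹ • v t) = T⁻¹ * Th (q t) (v t) := by
        rw [ContinuousLinearMap.map_smul]; rfl
      rw [hth] at h
      calc L (q t) (T⁻¹ • v t) + T⁻¹ * Th (q t) (v t) + k
          ≤ f₁ * ‖T⁻¹ • v t‖ ^ 2 + f₂ + k := by linarith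
        _ = f₁ * (T⁻¹ ^ 2 * ‖v t‖ ^ 2) + f₂ + k := by rw [hnorm t]
    have hcalc : (∫ t in (0:ℝ)..1, (f₁ * (T⁻¹ ^ 2 * ‖v t‖ ^ 2) + f₂ + k))
        = f₁ * (T⁻¹ ^ 2 * A) + f₂ + k := by
      rw [intervalIntegral.integral_add
            (((hv2.const_mul (T⁻¹ ^ 2)).const_mul f₁).add intervalIntegrable_const)
            intervalIntegrable_const,
          intervalIntegral.integral_add ((hv2.const_mul (T⁻¹ ^ 2)).const_mul f₁)
            intervalIntegrable_const,
          intervalIntegral.integral_const_mul, intervalIntegral.integral_const_mul,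
          intervalIntegral.integral_const, intervalIntegral.integral_const]
      simp [hA]
    linarith [hmono, hcalc.le, hcalc.ge]
  -- Step 3: deduce lower bound on T⁻²A
  have hkey : |k| + g₂ + 1 < g₁ * (T⁻¹ ^ 2 * A) := by
    have hk : k ≤ |k| := le_abs_self k
    have h2 : f₁ * ((|k| + g₂ + 1) / g₁) < f₁ * (T⁻¹ ^ 2 * A) := by linarith
    have h3 : (|k| + g₂ + 1) / g₁ < T⁻¹ ^ 2 * A := lt_of_mul_lt_mul_left h2 hf₁.le
    calc |k| + g₂ + 1 = g₁ * ((|k| + g₂ + 1) / g₁) := by field_simp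
      _ < g₁ * (T⁻¹ ^ 2 * A) := by exact mul_lt_mul_of_pos_left h3 hg₁
  -- Step 4: upper bound the derivative integral
  have hub2 : (∫ t in (0:ℝ)..1, (k - En (q t) (T⁻¹ • v t)))
      ≤ k + g₂ - g₁ * (T⁻¹ ^ 2 * A) := by
    have hrhs : IntervalIntegrable
        (fun t => k + g₂ - g₁ * (T⁻¹ ^ 2 * ‖v t‖ ^ 2)) volume 0 1 :=
      intervalIntegrable_const.sub ((hv2.const_mul (T⁻¹ ^ 2)).const_mul g₁)
    have hmono : (∫ t in (0:ℝ)..1, (k - En (q t) (T⁻¹ • v t)))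
        ≤ ∫ t in (0:ℝ)..1, (k + g₂ - g₁ * (T⁻¹ ^ 2 * ‖v t‖ ^ 2)) := by
      apply intervalIntegral.integral_mono_on (by norm_num)
        (intervalIntegrable_const.sub (hEint T hT)) hrhs
      intro t _
      have h := hEn (q t) (T⁻¹ • v t)
      rw [hnorm t] at h
      linarith
    have hcalc : (∫ t in (0:ℝ)..1, (k + g₂ - g₁ * (T⁻¹ ^ 2 * ‖v t‖ ^ 2)))
        = k + g₂ - g₁ * (T⁻¹ ^ 2 * A) := by
      rw [intervalIntegral.integral_sub intervalIntegrable_const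
            ((hv2.const_mul (T⁻¹ ^ 2)).const_mul g₁),
          intervalIntegral.integral_const_mul, intervalIntegral.integral_const_mul,
          intervalIntegral.integral_const]
      simp [hA]
    linarith [hmono, hcalc.le, hcalc.ge]
  have hk : k ≤ |k| := le_abs_self k
  linarith
end

section
/- For any (x,η) ∈ ΛT*M × ℝ with η > 0 and q := π∘x, one has A_{H−k}(x,η) ≤ S_{L+k}(q,η), with equality if and only if x = (q,q̇) (i.e. p(t) = q̇(t)/η up to the dynamical identification); and A_{H−k}(x⁻,−η) ≥ −S_{L+k}(q,η) with equality iff x = (q,q̇), where x⁻(t) := x(−t). -/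
open MeasureTheory
open scoped RealInnerProductSpace

/-!
The Fenchel inequality `⟪p, v⟫ ≤ ½‖p‖² + ½‖v‖²` holds with defect `½‖p - v‖²`. Applied pointwise
with `v = q̇/η` and integrated over the loop, it gives
`S_{L+k}(q, η) - A_{H-k}(x, η) = (η/2) ∫₀¹ ‖p - q̇/η‖²`, which is nonnegative and, the integrand
being continuous and periodic, vanishes exactly when `p = q̇/η` everywhere. Reversing the loop
while changing the sign of `η` negates the Rabinowitz action, which gives the second pair of
claims.
-/

namespace Function.Periodic

variable {T : ℝ}

protected theorem deriv {E : Type*} [NormedAddCommGroup E] [NormedSpace ℝ E] {g : ℝ → E}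
    (hg : Periodic g T) : Periodic (_root_.deriv g) T := fun t => by
  rw [← deriv_comp_add_const, show (fun s => g (s + T)) = g from funext hg]

theorem intervalIntegral_comp_neg {E : Type*} [NormedAddCommGroup E] [NormedSpace ℝ E]
    {f : ℝ → E} (hf : Periodic f T) : ∫ t in (0:ℝ)..T, f (-t) = ∫ t in (0:ℝ)..T, f t := by
  rw [intervalIntegral.integral_comp_neg, neg_zero]
  simpa using hf.intervalIntegral_add_eq (-T) 0

theorem intervalIntegral_eq_zero_iff_of_nonneg {f : ℝ → ℝ} (hf : Periodic f T) (hT : 0 < T)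
    (hcont : Continuous f) (hnonneg : 0 ≤ f) : ∫ t in (0:ℝ)..T, f t = 0 ↔ f = 0 := by
  refine ⟨fun h => ?_, fun h => by simp [h]⟩
  have hae : f =ᵐ[volume.restrict (Set.Icc 0 T)] 0 := by
    rw [Measure.restrict_congr_set Ioc_ae_eq_Icc.symm]
    exact (intervalIntegral.integral_eq_zero_iff_of_le_of_nonneg_ae hT.le
      (ae_of_all _ hnonneg) (hcont.intervalIntegrable 0 T)).1 h
  have hIcc := Measure.eqOn_Icc_of_ae_eq volume hT.ne hae hcont.continuousOn continuousOn_const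
  funext t
  obtain ⟨s, hs, hts⟩ := hf.exists_mem_Ico₀ hT t
  rw [hts]
  exact hIcc (Set.Ico_subset_Icc_self hs)

end Function.Periodic

theorem intervalIntegral_norm_sub_sq_eq_zero_iff {E : Type*} [NormedAddCommGroup E]
    {u w : ℝ → E} {T : ℝ} (hT : 0 < T) (hu : Continuous u) (hw : Continuous w)
    (hup : Function.Periodic u T) (hwp : Function.Periodic w T) :
    ∫ t in (0:ℝ)..T, ‖u t - w t‖ ^ 2 = 0 ↔ u = w := by
  have hper : Function.Periodic (fun t => ‖u t - w t‖ ^ 2) T := fun t => by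
    simp only [hup t, hwp t]
  rw [hper.intervalIntegral_eq_zero_iff_of_nonneg hT (by fun_prop) (fun t => by positivity),
    funext_iff, funext_iff]
  simp [sub_eq_zero]

section Actions

variable {F : Type*} [NormedAddCommGroup F] [InnerProductSpace ℝ F]

theorem mul_half_norm_sq_add_half_norm_sq_sub_inner {η : ℝ} (hη : η ≠ 0) (p v : F) :
    η * ((1 / 2) * ‖η⁻¹ • v‖ ^ 2 + (1 / 2) * ‖p‖ ^ 2) - ⟪p, v⟫ = η / 2 * ‖p - η⁻¹ • v‖ ^ 2 := by
  rw [norm_sub_sq_real, real_inner_smul_right]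
  field_simp
  ring

/-- `A_{H-k}(x, η)` for the loop `x = (q, p)` in `T*M ≅ F × F`: the symplectic area `∫_C x̄*ω` is
written as `∫₀¹ (⟪p, q̇⟫ + Th_q(q̇))`, `Th` being a primitive of `σ`. -/
noncomputable def rabinowitzAction (U : F → ℝ) (Th : F → F →L[ℝ] ℝ) (k : ℝ) (q p : ℝ → F)
    (η : ℝ) : ℝ :=
  (∫ t in (0:ℝ)..1, (⟪p t, deriv q t⟫ + Th (q t) (deriv q t)))
    - η * ∫ t in (0:ℝ)..1, ((1 / 2) * ‖p t‖ ^ 2 + U (q t) - k)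

/-- `S_{L+k}(q, T)`, with the magnetic term written as in `rabinowitzAction`. -/
noncomputable def freeTimeAction (U : F → ℝ) (Th : F → F →L[ℝ] ℝ) (k : ℝ) (q : ℝ → F)
    (T : ℝ) : ℝ :=
  T * (∫ t in (0:ℝ)..1, ((1 / 2) * ‖T⁻¹ • deriv q t‖ ^ 2 - U (q t) + k))
    + ∫ t in (0:ℝ)..1, Th (q t) (deriv q t)

variable {U : F → ℝ} {Th : F → F →L[ℝ] ℝ} {k : ℝ} {q p : ℝ → F} {η : ℝ}

theorem rabinowitzAction_comp_neg (hq : Function.Periodic q 1) (hp : Function.Periodic p 1) :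
    rabinowitzAction U Th k (fun t => q (-t)) (fun t => p (-t)) (-η)
      = -rabinowitzAction U Th k q p η := by
  let g : ℝ → ℝ := fun s => ⟪p s, deriv q s⟫ + Th (q s) (deriv q s)
  have hg : Function.Periodic g 1 := fun s => by simp only [g, hp s, hq s, hq.deriv s]
  have hH : Function.Periodic (fun s => (1 / 2) * ‖p s‖ ^ 2 + U (q s) - k) 1 := fun s => by
    simp only [hp s, hq s]
  have hgneg : ∀ t, ⟪p (-t), deriv (fun s => q (-s)) t⟫ + Th (q (-t)) (deriv (fun s => q (-s)) t)
      = -g (-t) := fun t => by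
    simp only [g, deriv_comp_neg, inner_neg_right, map_neg, neg_add]
  unfold rabinowitzAction
  simp only [hgneg, intervalIntegral.integral_neg, hg.intervalIntegral_comp_neg,
    hH.intervalIntegral_comp_neg]
  ring

theorem freeTimeAction_sub_rabinowitzAction (hU : Continuous U) (hTh : Continuous Th)
    (hq : ContDiff ℝ 1 q) (hp : Continuous p) (hη : η ≠ 0) :
    freeTimeAction U Th k q η - rabinowitzAction U Th k q p η
      = η / 2 * ∫ t in (0:ℝ)..1, ‖p t - η⁻¹ • deriv q t‖ ^ 2 := by
  have hv : Continuous (deriv q) := hq.continuous_deriv le_rfl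
  have hqc : Continuous q := hq.continuous
  have hgap : ∀ t, η / 2 * ‖p t - η⁻¹ • deriv q t‖ ^ 2
      = η * ((1 / 2) * ‖η⁻¹ • deriv q t‖ ^ 2 - U (q t) + k)
        + η * ((1 / 2) * ‖p t‖ ^ 2 + U (q t) - k) - ⟪p t, deriv q t⟫ := fun t => by
    rw [← mul_half_norm_sq_add_half_norm_sq_sub_inner hη]
    ring
  have hint : ∀ f : ℝ → ℝ, Continuous f → IntervalIntegrable f volume 0 1 :=
    fun f hf => hf.intervalIntegrable 0 1
  have hlin : ∫ t in (0:ℝ)..1, (η * ((1 / 2) * ‖η⁻¹ • deriv q t‖ ^ 2 - U (q t) + k)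
        + η * ((1 / 2) * ‖p t‖ ^ 2 + U (q t) - k) - ⟪p t, deriv q t⟫)
      = η * (∫ t in (0:ℝ)..1, ((1 / 2) * ‖η⁻¹ • deriv q t‖ ^ 2 - U (q t) + k))
        + η * (∫ t in (0:ℝ)..1, ((1 / 2) * ‖p t‖ ^ 2 + U (q t) - k))
        - ∫ t in (0:ℝ)..1, ⟪p t, deriv q t⟫ := by
    rw [intervalIntegral.integral_sub (hint _ (by fun_prop)) (hint _ (by fun_prop)),
      intervalIntegral.integral_add (hint _ (by fun_prop)) (hint _ (by fun_prop)),
      intervalIntegral.integral_const_mul, intervalIntegral.integral_const_mul]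
  unfold freeTimeAction rabinowitzAction
  rw [← intervalIntegral.integral_const_mul (η / 2), funext hgap, hlin,
    intervalIntegral.integral_add (f := fun t => ⟪p t, deriv q t⟫) (hint _ (by fun_prop))
      (hint _ (by fun_prop))]
  ring

theorem rabinowitzAction_le_freeTimeAction (hU : Continuous U) (hTh : Continuous Th)
    (hq : ContDiff ℝ 1 q) (hp : Continuous p) (hqper : Function.Periodic q 1)
    (hpper : Function.Periodic p 1) (hη : 0 < η) :
    rabinowitzAction U Th k q p η ≤ freeTimeAction U Th k q η
      ∧ (rabinowitzAction U Th k q p η = freeTimeAction U Th k q η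
          ↔ ∀ t, p t = η⁻¹ • deriv q t) := by
  have hgap := freeTimeAction_sub_rabinowitzAction (k := k) hU hTh hq hp hη.ne'
  have hv : Continuous (deriv q) := hq.continuous_deriv le_rfl
  have hdefect : 0 ≤ ∫ t in (0:ℝ)..1, ‖p t - η⁻¹ • deriv q t‖ ^ 2 :=
    intervalIntegral.integral_nonneg zero_le_one fun t _ => by positivity
  have hzero := intervalIntegral_norm_sub_sq_eq_zero_iff (w := fun t => η⁻¹ • deriv q t)
    zero_lt_one hp (by fun_prop) hpper (fun t => by simp only [hqper.deriv t])
  refine ⟨by nlinarith, ?_⟩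
  rw [← funext_iff, ← hzero, eq_comm, ← sub_eq_zero, hgap]
  simp [hη.ne']

end Actions

theorem rabinowitz_action_le_free_time_action
    {F : Type*} [NormedAddCommGroup F] [InnerProductSpace ℝ F]
    (U : F → ℝ) (hU : Continuous U) (Th : F → F →L[ℝ] ℝ) (hTh : Continuous Th) (k : ℝ)
    (q : ℝ → F) (p : ℝ → F) (η : ℝ) (hη : 0 < η)
    (hq : ContDiff ℝ 1 q) (hp : Continuous p)
    (hqper : Function.Periodic q 1) (hpper : Function.Periodic p 1) :
    -- A_{H−k}(x,η) ≤ S_{L+k}(q,η), with equality iff p = q̇/η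
    (((∫ t in (0:ℝ)..1, (⟪p t, deriv q t⟫ + Th (q t) (deriv q t)))
        - η * ∫ t in (0:ℝ)..1, ((1 / 2) * ‖p t‖ ^ 2 + U (q t) - k))
      ≤ η * (∫ t in (0:ℝ)..1, ((1 / 2) * ‖η⁻¹ • deriv q t‖ ^ 2 - U (q t) + k))
        + ∫ t in (0:ℝ)..1, Th (q t) (deriv q t))
    ∧ ((((∫ t in (0:ℝ)..1, (⟪p t, deriv q t⟫ + Th (q t) (deriv q t)))
        - η * ∫ t in (0:ℝ)..1, ((1 / 2) * ‖p t‖ ^ 2 + U (q t) - k))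
      = η * (∫ t in (0:ℝ)..1, ((1 / 2) * ‖η⁻¹ • deriv q t‖ ^ 2 - U (q t) + k))
        + ∫ t in (0:ℝ)..1, Th (q t) (deriv q t))
      ↔ ∀ t, p t = η⁻¹ • deriv q t)
    -- A_{H−k}(x⁻,−η) ≥ −S_{L+k}(q,η), with equality iff p = q̇/η
    ∧ (-(η * (∫ t in (0:ℝ)..1, ((1 / 2) * ‖η⁻¹ • deriv q t‖ ^ 2 - U (q t) + k))
          + ∫ t in (0:ℝ)..1, Th (q t) (deriv q t))
      ≤ (∫ t in (0:ℝ)..1,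
            (⟪p (-t), deriv (fun s => q (-s)) t⟫ + Th (q (-t)) (deriv (fun s => q (-s)) t)))
          - (-η) * ∫ t in (0:ℝ)..1, ((1 / 2) * ‖p (-t)‖ ^ 2 + U (q (-t)) - k))
    ∧ (((∫ t in (0:ℝ)..1,
            (⟪p (-t), deriv (fun s => q (-s)) t⟫ + Th (q (-t)) (deriv (fun s => q (-s)) t)))
          - (-η) * ∫ t in (0:ℝ)..1, ((1 / 2) * ‖p (-t)‖ ^ 2 + U (q (-t)) - k)
        = -(η * (∫ t in (0:ℝ)..1, ((1 / 2) * ‖η⁻¹ • deriv q t‖ ^ 2 - U (q t) + k))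
            + ∫ t in (0:ℝ)..1, Th (q t) (deriv q t)))
      ↔ ∀ t, p t = η⁻¹ • deriv q t) := by
  obtain ⟨hle, heq⟩ := rabinowitzAction_le_freeTimeAction (k := k) hU hTh hq hp hqper hpper hη
  have hrev := rabinowitzAction_comp_neg (U := U) (Th := Th) (k := k) (η := η) hqper hpper
  refine ⟨hle, heq, ?_, ?_⟩
  · change -freeTimeAction U Th k q η
      ≤ rabinowitzAction U Th k (fun t => q (-t)) (fun t => p (-t)) (-η)
    rw [hrev]
    exact neg_le_neg hle
  · change rabinowitzAction U Th k (fun t => q (-t)) (fun t => p (-t)) (-η)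
      = -freeTimeAction U Th k q η ↔ _
    rw [hrev, neg_inj]
    exact heq
end

section
/- (A priori bound on the Lagrange multiplier.) Suppose there exist a 1-form λ̃ on T*M̃, δ > 0, and a constant D < ∞ with λ̃(X_{H̃}(x)) ≥ 2δ for all x with H̃(x) ∈ [k−δ, k+δ] and |λ̃| ≤ D on this region. Then for every loop (x,η) ∈ Λ_α T*M × ℝ with x(S¹) ⊆ H⁻¹([k−δ,k+δ]) one has |η| ≤ (1/δ)|A_{H−k}(x,η)| + (D/δ)‖∇A_{H−k}(x,η)‖_J + (1/δ)|I(α,θ)|, where I(α,θ) is the θ-integral over the (reversed) lifted reference loop of the class α. -/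
/-!
Split `ẋ = v + η X_H(x)` with `v = ẋ − η X_H(x)`. Then `∫ λ̃(ẋ) = ∫ λ̃(v) + η ∫ λ̃(X_H(x))`,
where the last integral is at least `2δ` by the contact condition and `|∫ λ̃(v)| ≤ D ∫ |v|` is
controlled by the gradient. Since also `|η ∫ (H(x) − k)| ≤ δ |η|` on the energy shell, the action
`A = ∫ λ̃(ẋ) + I − η ∫ (H(x) − k)` satisfies `2δ|η| ≤ |A| + |I| + δ|η| + D ‖∇A‖`.
-/

open MeasureTheory

namespace intervalIntegral

variable {E : Type*} [NormedAddCommGroup E] [NormedSpace ℝ E] {a b : ℝ}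

theorem integral_clm_apply_eq_sub_smul_add (L : ℝ → E →L[ℝ] ℝ) (u w : ℝ → E)
    (η : ℝ) (hv : IntervalIntegrable (fun t => L t (u t - η • w t)) volume a b)
    (hw : IntervalIntegrable (fun t => L t (w t)) volume a b) :
    ∫ t in a..b, L t (u t) = (∫ t in a..b, L t (u t - η • w t)) + η * ∫ t in a..b, L t (w t) := by
  rw [← integral_const_mul, ← integral_add hv (hw.const_mul η)]
  simp [map_sub, map_smul]

theorem abs_integral_clm_apply_le_mul (L : ℝ → E →L[ℝ] ℝ) (v : ℝ → E) {D : ℝ}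
    (hab : a ≤ b) (hv : IntervalIntegrable (fun t => ‖v t‖) volume a b)
    (hD : ∀ t ∈ Set.Icc a b, ‖L t‖ ≤ D) :
    |∫ t in a..b, L t (v t)| ≤ D * ∫ t in a..b, ‖v t‖ := by
  rw [← integral_const_mul, ← Real.norm_eq_abs]
  refine norm_integral_le_of_norm_le hab
    (Filter.Eventually.of_forall fun t ht => ?_) (hv.const_mul D)
  exact (L t).le_opNorm_of_le le_rfl |>.trans
    (mul_le_mul_of_nonneg_right (hD t (Set.Ioc_subset_Icc_self ht)) (norm_nonneg _))

end intervalIntegral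

theorem abs_le_of_contact_split {η A h G I E R δ : ℝ} (hδ : 0 < δ) (hG : 2 * δ ≤ G)
    (hsplit : A = h + η * G) (hh : |h| ≤ R) (hE : |E| ≤ δ) :
    |η| ≤ (1 / δ) * |A + I - η * E| + (1 / δ) * R + (1 / δ) * |I| := by
  have hηG : |η| * (2 * δ) ≤ |A - h| := by
    rw [hsplit, add_sub_cancel_left, abs_mul, abs_of_pos (show 0 < G by linarith)]
    exact mul_le_mul_of_nonneg_left hG (abs_nonneg η)
  have hηE : |η * E| ≤ |η| * δ := abs_mul η E ▸ mul_le_mul_of_nonneg_left hE (abs_nonneg η)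
  have hA : |A - h| ≤ |A + I - η * E| + |I| + |η| * δ + R := by
    rw [abs_le]
    constructor <;> linarith [le_abs_self (A + I - η * E), neg_abs_le (A + I - η * E),
      le_abs_self I, neg_abs_le I, le_abs_self (η * E), neg_abs_le (η * E), le_abs_self h,
      neg_abs_le h]
  rw [← mul_add, ← mul_add, one_div, ← div_eq_inv_mul, le_div_iff₀ hδ]
  linarith

theorem lagrange_multiplier_bound_general
    {P : Type*} [NormedAddCommGroup P] [NormedSpace ℝ P]
    (lam : P → P →L[ℝ] ℝ) (hlam : Continuous lam)
    (XH : P → P) (hXH : Continuous XH) (H : P → ℝ)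
    (k δ D Iα : ℝ) (hδ : 0 < δ)
    (hcontact : ∀ y, H y ∈ Set.Icc (k - δ) (k + δ) → 2 * δ ≤ lam y (XH y))
    (hD : ∀ y, H y ∈ Set.Icc (k - δ) (k + δ) → ‖lam y‖ ≤ D)
    (x : ℝ → P) (η : ℝ) (hx : ContDiff ℝ 1 x)
    (hrange : ∀ t ∈ Set.Icc (0:ℝ) 1, H (x t) ∈ Set.Icc (k - δ) (k + δ))
    (gnorm : ℝ)
    (hg : (∫ t in (0:ℝ)..1, ‖deriv x t - η • XH (x t)‖) ≤ gnorm) :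
    |η| ≤ (1 / δ) * |(∫ t in (0:ℝ)..1, lam (x t) (deriv x t)) + Iα
            - η * ∫ t in (0:ℝ)..1, (H (x t) - k)|
          + (D / δ) * gnorm + (1 / δ) * |Iα| := by
  have hL : Continuous fun t => lam (x t) := hlam.comp hx.continuous
  have hXHx : Continuous fun t => XH (x t) := hXH.comp hx.continuous
  have hv : Continuous fun t => deriv x t - η • XH (x t) :=
    (hx.continuous_deriv le_rfl).sub (hXHx.const_smul η)
  have hD0 : 0 ≤ D := (norm_nonneg _).trans (hD _ (hrange 0 ⟨le_rfl, zero_le_one⟩))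
  have hsplit := intervalIntegral.integral_clm_apply_eq_sub_smul_add (fun t => lam (x t))
    (deriv x) (fun t => XH (x t)) η ((hL.clm_apply hv).intervalIntegrable 0 1)
    ((hL.clm_apply hXHx).intervalIntegrable 0 1)
  have hG : 2 * δ ≤ ∫ t in (0:ℝ)..1, lam (x t) (XH (x t)) := by
    simpa using intervalIntegral.integral_mono_on (μ := volume) zero_le_one
      intervalIntegrable_const ((hL.clm_apply hXHx).intervalIntegrable 0 1)
      fun t ht => hcontact _ (hrange t ht)
  have hgrad := (intervalIntegral.abs_integral_clm_apply_le_mul (fun t => lam (x t)) _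
    zero_le_one (hv.norm.intervalIntegrable 0 1) fun t ht => hD _ (hrange t ht)).trans
    (mul_le_mul_of_nonneg_left hg hD0)
  have hshell : |∫ t in (0:ℝ)..1, (H (x t) - k)| ≤ δ := by
    have hbound : ∀ t ∈ Set.uIoc (0:ℝ) 1, ‖H (x t) - k‖ ≤ δ := fun t ht => by
      obtain ⟨hlo, hhi⟩ := hrange t (Set.Ioc_subset_Icc_self (by simpa using ht))
      exact abs_sub_le_iff.2 ⟨by linarith, by linarith⟩
    simpa using intervalIntegral.norm_integral_le_of_norm_le_const hbound
  calc |η| ≤ _ := abs_le_of_contact_split (I := Iα) hδ hG hsplit hgrad hshell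
    _ = _ := by ring

theorem lagrange_multiplier_bound
    {P : Type*} [NormedAddCommGroup P] [NormedSpace ℝ P]
    (lam : P → P →L[ℝ] ℝ) (hlam : Continuous lam)
    (XH : P → P) (hXH : Continuous XH) (H : P → ℝ) (hH : Continuous H)
    (k δ D Iα : ℝ) (hδ : 0 < δ)
    (hcontact : ∀ y, H y ∈ Set.Icc (k - δ) (k + δ) → 2 * δ ≤ lam y (XH y))
    (hD : ∀ y, H y ∈ Set.Icc (k - δ) (k + δ) → ‖lam y‖ ≤ D)
    (x : ℝ → P) (η : ℝ) (hx : ContDiff ℝ 1 x)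
    (hrange : ∀ t ∈ Set.Icc (0:ℝ) 1, H (x t) ∈ Set.Icc (k - δ) (k + δ))
    (gnorm : ℝ)
    (hg : (∫ t in (0:ℝ)..1, ‖deriv x t - η • XH (x t)‖) ≤ gnorm) :
    |η| ≤ (1 / δ) * |(∫ t in (0:ℝ)..1, lam (x t) (deriv x t)) + Iα
            - η * ∫ t in (0:ℝ)..1, (H (x t) - k)|
          + (D / δ) * gnorm + (1 / δ) * |Iα| :=
  lagrange_multiplier_bound_general lam hlam XH hXH H k δ D Iα hδ hcontact hD x η hx hrange gnorm hg
end

section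
/- Let u = (x,η): ℝ → ΛT*M × ℝ solve the negative gradient flow equation u' + ∇A_{H−k}(u) = 0 with action bounds A_{H−k}(u(ℝ)) ⊆ [a,b]. Suppose ρ₀ > 0 is such that ‖∇A_{H−k}(x,η)‖_J ≤ ρ₀ implies |η| ≤ ρ₁(|A_{H−k}(x,η)| + 1). Define τ(s) := inf{r ≥ 0 : ‖∇A_{H−k}(u(s+r,·))‖_J ≤ ρ₀}. Then τ(s) ≤ (b−a)/ρ₀² for all s, and consequently ‖η‖_{L^∞(ℝ)} ≤ ρ₁(max{|a|,|b|}+1) + (b−a)/ρ₀. -/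
open MeasureTheory

/-!
STATEMENT 11: Let `u = (x,η) : ℝ → ΛT*M × ℝ` solve the negative gradient flow equation
`u' + ∇A_{H−k}(u) = 0` with action bounds `A_{H−k}(u(ℝ)) ⊆ [a,b]`.  Suppose `ρ₀ > 0` is such
that `‖∇A_{H−k}(x,η)‖_J ≤ ρ₀` implies `|η| ≤ ρ₁(|A_{H−k}(x,η)| + 1)`.  Define
`τ(s) := inf{r ≥ 0 : ‖∇A_{H−k}(u(s+r,·))‖_J ≤ ρ₀}`.  Then `τ(s) ≤ (b−a)/ρ₀²` for all `s`, and
consequently `‖η‖_{L^∞(ℝ)} ≤ ρ₁(max{|a|,|b|}+1) + (b−a)/ρ₀`.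

We record the flow line through the functions of `s` it determines: its action `A s := A_{H−k}(u(s))`,
the gradient norm `g s := ‖∇A_{H−k}(u(s))‖_J`, and the Lagrange multiplier component `η`.  The
gradient flow equation gives `A' = −g²` and `|η'| ≤ g` (since `‖u'‖_J = g` and the `η`-component
of `∇A_{H−k}` is `−∫(H−k)dt = −η'`).
-/
theorem eta_Linfty_bound_along_flow_lines
    (A g η dη : ℝ → ℝ) (a b ρ₀ ρ₁ : ℝ)
    (hab : a ≤ b) (hρ₀ : 0 < ρ₀) (hρ₁ : 0 ≤ ρ₁)
    (hAbound : ∀ s, A s ∈ Set.Icc a b)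
    (hA' : ∀ s, HasDerivAt A (-(g s) ^ 2) s)
    (hg0 : ∀ s, 0 ≤ g s) (hgc : Continuous g)
    (hη : ∀ s, HasDerivAt η (dη s) s)
    (hηg : ∀ s, |dη s| ≤ g s)
    (hsmall : ∀ s, g s ≤ ρ₀ → |η s| ≤ ρ₁ * (|A s| + 1)) :
    (∀ s : ℝ, sInf {r : ℝ | 0 ≤ r ∧ g (s + r) ≤ ρ₀} ≤ (b - a) / ρ₀ ^ 2)
    ∧ ∀ s : ℝ, |η s| ≤ ρ₁ * (max |a| |b| + 1) + (b - a) / ρ₀ := by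
  have hρ₀2 : (0:ℝ) < ρ₀ ^ 2 := by positivity
  set T : ℝ := (b - a) / ρ₀ ^ 2 with hT
  have hT0 : 0 ≤ T := div_nonneg (by linarith) hρ₀2.le
  have hg2int : ∀ s t : ℝ, IntervalIntegrable (fun r => g r ^ 2) volume s t :=
    fun s t => ((hgc.pow 2).intervalIntegrable s t)
  have hFTC : ∀ s t : ℝ, s ≤ t → ∫ r in s..t, g r ^ 2 = A s - A t := by
    intro s t hst
    have h1 := intervalIntegral.integral_eq_sub_of_hasDerivAt
      (f := A) (f' := fun r => -(g r ^ 2)) (a := s) (b := t)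
      (fun x _ => hA' x) (((hgc.pow 2).neg).intervalIntegrable s t)
    have h2 : ∫ r in s..t, -(g r ^ 2) = -∫ r in s..t, g r ^ 2 :=
      intervalIntegral.integral_neg
    rw [h2] at h1
    linarith
  have hInt_le : ∀ s t : ℝ, s ≤ t → ∫ r in s..t, g r ^ 2 ≤ b - a := by
    intro s t hst
    rw [hFTC s t hst]
    have h1 := hAbound s; have h2 := hAbound t
    simp only [Set.mem_Icc] at h1 h2
    linarith
  have key : ∀ s T' : ℝ, T < T' → ∃ r, 0 ≤ r ∧ r ≤ T' ∧ g (s + r) ≤ ρ₀ := by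
    intro s T' hTT'
    by_contra hcon
    push_neg at hcon
    have hT'0 : 0 ≤ T' := le_trans hT0 hTT'.le
    have hmono : ∫ _r in s..(s + T'), (ρ₀ ^ 2) ≤ ∫ r in s..(s + T'), g r ^ 2 := by
      apply intervalIntegral.integral_mono_on (by linarith)
        (intervalIntegrable_const) (hg2int s (s + T'))
      intro x hx
      have hx1 : 0 ≤ x - s := by linarith [hx.1]
      have hx2 : x - s ≤ T' := by linarith [hx.2]
      have h3 := hcon (x - s) hx1 hx2
      rw [add_sub_cancel] at h3
      nlinarith [hg0 x]
    rw [intervalIntegral.integral_const, smul_eq_mul, add_sub_cancel_left] at hmono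
    have h1 : ∫ r in s..(s + T'), g r ^ 2 ≤ b - a := hInt_le s (s + T') (by linarith)
    have h2 : ρ₀ ^ 2 * T = b - a := by
      rw [hT]; field_simp
    nlinarith
  have hSne : ∀ s : ℝ, {r : ℝ | 0 ≤ r ∧ g (s + r) ≤ ρ₀}.Nonempty := by
    intro s
    obtain ⟨r, h1, _, h3⟩ := key s (T + 1) (by linarith)
    exact ⟨r, h1, h3⟩
  have hSbdd : ∀ s : ℝ, BddBelow {r : ℝ | 0 ≤ r ∧ g (s + r) ≤ ρ₀} :=
    fun s => ⟨0, fun r hr => hr.1⟩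
  have part1 : ∀ s : ℝ, sInf {r : ℝ | 0 ≤ r ∧ g (s + r) ≤ ρ₀} ≤ T := by
    intro s
    apply le_of_forall_pos_le_add
    intro ε hε
    obtain ⟨r, h1, h2, h3⟩ := key s (T + ε) (by linarith)
    exact le_trans (csInf_le (hSbdd s) ⟨h1, h3⟩) h2
  refine ⟨part1, fun s => ?_⟩
  set S : Set ℝ := {r : ℝ | 0 ≤ r ∧ g (s + r) ≤ ρ₀} with hS
  have hSclosed : IsClosed S := by
    apply IsClosed.inter isClosed_Ici
    exact isClosed_le (hgc.comp (continuous_const.add continuous_id)) continuous_const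
  set τ : ℝ := sInf S with hτ
  have hτmem : τ ∈ S := hSclosed.csInf_mem (hSne s) (hSbdd s)
  have hτ0 : 0 ≤ τ := hτmem.1
  have hτg : g (s + τ) ≤ ρ₀ := hτmem.2
  have hge : ∀ x, s ≤ x → x < s + τ → ρ₀ ≤ g x := by
    intro x hx1 hx2
    by_contra hlt
    push_neg at hlt
    have hmem : x - s ∈ S := ⟨by linarith, by rw [add_sub_cancel]; exact hlt.le⟩
    have h4 := csInf_le (hSbdd s) hmem
    rw [← hτ] at h4
    linarith
  have hgint : IntervalIntegrable g volume s (s + τ) := hgc.intervalIntegrable _ _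
  -- a.e. statement excluding the endpoint
  have hae : ∀ᵐ x ∂((volume : Measure ℝ).restrict (Set.Icc s (s + τ))),
      ρ₀ * g x ≤ g x ^ 2 := by
    have hne : ∀ᵐ x : ℝ, x ≠ s + τ := by
      rw [ae_iff]
      have he : {x : ℝ | ¬ x ≠ s + τ} = {s + τ} := by ext x; simp
      rw [he, Real.volume_singleton]
    have hne' := ae_restrict_of_ae (s := Set.Icc s (s + τ)) hne
    filter_upwards [hne', ae_restrict_mem measurableSet_Icc] with x hx hmem
    have hlt : x < s + τ := lt_of_le_of_ne hmem.2 hx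
    have h5 := hge x hmem.1 hlt
    nlinarith [hg0 x]
  have hmul : ρ₀ * ∫ r in s..(s + τ), g r ≤ ∫ r in s..(s + τ), g r ^ 2 := by
    rw [← intervalIntegral.integral_const_mul]
    exact intervalIntegral.integral_mono_ae_restrict (by linarith)
      (hgint.const_mul ρ₀) (hg2int s (s + τ)) hae
  have hgle : ∫ r in s..(s + τ), g r ≤ (b - a) / ρ₀ := by
    rw [le_div_iff₀ hρ₀, mul_comm]
    exact le_trans hmul (hInt_le s (s + τ) (by linarith))
  -- integrate dη
  have hdηmeas : Measurable dη := by
    have : dη = deriv η := funext fun x => ((hη x).deriv).symm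
    rw [this]; exact measurable_deriv η
  have hdηint : IntervalIntegrable dη volume s (s + τ) := by
    apply hgint.mono_fun hdηmeas.aestronglyMeasurable.restrict
    filter_upwards with x
    simp only [Real.norm_eq_abs]
    exact le_trans (hηg x) (le_abs_self _)
  have hηFTC : ∫ r in s..(s + τ), dη r = η (s + τ) - η s :=
    intervalIntegral.integral_eq_sub_of_hasDerivAt (fun x _ => hη x) hdηint
  have habs : |η (s + τ) - η s| ≤ ∫ r in s..(s + τ), g r := by
    rw [← hηFTC]
    refine le_trans (intervalIntegral.abs_integral_le_integral_abs (by linarith)) ?_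
    apply intervalIntegral.integral_mono_on (by linarith) hdηint.abs hgint
    intro x _
    exact hηg x
  have hηend : |η (s + τ)| ≤ ρ₁ * (max |a| |b| + 1) := by
    have h6 := hsmall (s + τ) hτg
    have h7 := hAbound (s + τ)
    simp only [Set.mem_Icc] at h7
    have h8 : |A (s + τ)| ≤ max |a| |b| := abs_le_max_abs_abs h7.1 h7.2
    nlinarith
  calc |η s| ≤ |η (s + τ)| + |η (s + τ) - η s| := by
        have := abs_sub_abs_le_abs_sub (η s) (η (s + τ))
        have := abs_sub_comm (η s) (η (s + τ))
        nlinarith [abs_nonneg (η (s + τ) - η s), abs_sub_abs_le_abs_sub (η s) (η (s + τ)),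
          abs_sub_comm (η s) (η (s + τ))]
    _ ≤ ρ₁ * (max |a| |b| + 1) + (b - a) / ρ₀ := by
        have h9 := le_trans habs hgle
        linarith
end

section
/- Let H_R := ρ_R ∘ H where ρ_R(t) = Rρ(t/R), ρ: ℝ → (−∞,1] smooth with ρ(t) = t for t ≤ 1−δ, ρ(t) = 1 for t ≥ 1+δ, 0 ≤ ρ' ≤ 1, and 0 < δ < 1/3. If R > ‖U‖_∞/(1−3δ), then for every (q,p) ∈ T*M: ρ_R'(H(q,p)) |p|² ≤ ρ_{4R}(|p|²), where H(q,p) = ½|p|² + U(q). -/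
/-!
STATEMENT 17 (truncation estimate): Let `H_R := ρ_R ∘ H`, where `ρ_R(t) = R ρ(t/R)`,
`ρ : ℝ → (−∞,1]` is smooth with `ρ(t) = t` for `t ≤ 1−δ`, `ρ(t) = 1` for `t ≥ 1+δ`,
`0 ≤ ρ' ≤ 1`, and `0 < δ < 1/3`.  If `R > ‖U‖_∞/(1−3δ)`, then for every `(q,p) ∈ T*M`:
`ρ_R'(H(q,p)) |p|² ≤ ρ_{4R}(|p|²)`, where `H(q,p) = ½|p|² + U(q)`.

The base manifold is modeled by an arbitrary type `α` with potential `U` bounded by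
`Usup = ‖U‖_∞`, and the fiber variable enters only through `r = |p|² ≥ 0`.
-/
theorem truncation_estimate
    {α : Type*} (U : α → ℝ) (Usup : ℝ) (hU : ∀ q, |U q| ≤ Usup) (hUsup : 0 ≤ Usup)
    (δ R : ℝ) (hδ0 : 0 < δ) (hδ : δ < 1 / 3)
    (ρ : ℝ → ℝ) (hρ_smooth : ContDiff ℝ (⊤ : ℕ∞) ρ) (hρ_le : ∀ t, ρ t ≤ 1)
    (hρ_id : ∀ t ≤ 1 - δ, ρ t = t) (hρ_const : ∀ t, 1 + δ ≤ t → ρ t = 1)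
    (hρ' : ∀ t, 0 ≤ deriv ρ t ∧ deriv ρ t ≤ 1)
    (hR : Usup / (1 - 3 * δ) < R) :
    ∀ (q : α) (r : ℝ), 0 ≤ r →
      deriv (fun t => R * ρ (t / R)) ((1 / 2) * r + U q) * r ≤ 4 * R * ρ (r / (4 * R)) := by
  intro q r hr
  have hδ3 : (0:ℝ) < 1 - 3 * δ := by linarith
  have hR0 : 0 < R := lt_of_le_of_lt (div_nonneg hUsup hδ3.le) hR
  have hRU : Usup < R * (1 - 3 * δ) := by
    rw [div_lt_iff₀ hδ3] at hR; linarith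
  have hρdiff : Differentiable ℝ ρ := hρ_smooth.differentiable (by simp)
  have hmono : Monotone ρ :=
    monotone_of_deriv_nonneg hρdiff fun t => (hρ' t).1
  have hρ0 : (0:ℝ) ≤ ρ (r / (4 * R)) := by
    have h0 : ρ 0 = 0 := by simpa using hρ_id 0 (by linarith)
    have := hmono (show (0:ℝ) ≤ r / (4 * R) from div_nonneg hr (by linarith))
    linarith
  have hderiv : deriv (fun s => R * ρ (s / R)) ((1 / 2) * r + U q) = deriv ρ (((1 / 2) * r + U q) / R) := by
    have h1 : HasDerivAt (fun s : ℝ => s / R) (1 / R) ((1 / 2) * r + U q) := by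
      simpa using (hasDerivAt_id ((1 / 2) * r + U q)).div_const R
    have h2 := ((hρdiff (((1 / 2) * r + U q) / R)).hasDerivAt.comp ((1 / 2) * r + U q) h1).const_mul R
    rw [show (fun s => R * ρ (s / R)) = fun y => R * (ρ ∘ fun s => s / R) y from rfl,
      h2.deriv]
    field_simp
  rw [hderiv]
  by_cases hcase : r ≤ 4 * R * (1 - δ)
  · have hrle : r / (4 * R) ≤ 1 - δ := by
      rw [div_le_iff₀ (by linarith)]; linarith
    rw [hρ_id _ hrle]
    have : 4 * R * (r / (4 * R)) = r := by field_simp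
    rw [this]
    calc deriv ρ (((1 / 2) * r + U q) / R) * r ≤ 1 * r := by
          exact mul_le_mul_of_nonneg_right (hρ' _).2 hr
      _ = r := one_mul r
  · push_neg at hcase
    have hUq : -Usup ≤ U q := neg_le_of_abs_le (hU q)
    have hHgt : 1 + δ < ((1 / 2) * r + U q) / R := by
      rw [lt_div_iff₀ hR0]
      have h3 : R + R * δ < 2 * R - 2 * R * δ - Usup := by nlinarith
      nlinarith
    have hd0 : deriv ρ (((1 / 2) * r + U q) / R) = 0 := by
      have hev : ρ =ᶠ[nhds (((1 / 2) * r + U q) / R)] fun _ => (1:ℝ) := by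
        filter_upwards [Ioi_mem_nhds hHgt] with t ht
        exact hρ_const t (le_of_lt ht)
      rw [hev.deriv_eq, deriv_const]
    rw [hd0, zero_mul]
    positivity
end

section
/- (Leaf-wise intersection criterion.) Let (G,F) be a Moser pair for Σ_k: G(t,x) = χ(t)G₀(x) with χ supported in (0,1/2) and ∫χ = 1, G₀ compactly supported with G₀⁻¹(0) = Σ_k and X_{G₀}|_{Σ_k} = X_H|_{Σ_k}; and F(t,·) ≡ 0 for t ∈ [1/2,1]. If (x,η) is a critical point of the perturbed Rabinowitz functional, i.e. ẋ = ηχ(t)X_{G₀}(x) + X_F(t,x) and ∫_{S¹}χ(t)G₀(x(t))dt = 0, then y := x(1/2) lies in Σ_k and ψ(y) ∈ 𝓛_y for ψ = φ₁^F, i.e. y is a leaf-wise intersection point for ψ. -/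
open Set

/-!
On `[0, 1/2]` the perturbation `X_F` vanishes, so `x` solves `ẋ = ηχ(t) X_{G₀}(x)`. Since `X_{G₀}`
is tangent to the level sets of `G₀`, the function `G₀ ∘ x` is constant there, and the constraint
`∫ χ (G₀ ∘ x) = 0` together with `∫ χ = 1` forces that constant to be `0`. Hence `x([0, 1/2]) ⊆ Σ_k`,
where `X_{G₀} = X_H`, so `x` is a time-reparametrization of the flow of `X_H`:
`x(1/2) = φ^H_τ(x(0))` with `τ = η ∫₀^{1/2} χ`. On `[1/2, 1]` the term `χ` vanishes, so `x` follows
`X_F` and `ψ(x(1/2)) = x(1) = x(0) = φ^H_{-τ}(x(1/2))`.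
-/

section Flow

variable {E : Type*} [NormedAddCommGroup E] [NormedSpace ℝ E]
  {X : E → E} {K : NNReal} {Φ : ℝ → E → E}

theorem flow_add (hX : LipschitzWith K X) (hΦ0 : ∀ y, Φ 0 y = y)
    (hΦ : ∀ y s, HasDerivAt (fun u => Φ u y) (X (Φ s y)) s) (s t : ℝ) (y : E) :
    Φ (s + t) y = Φ s (Φ t y) :=
  congrFun (ODE_solution_unique_univ (v := fun _ => X) (s := fun _ => univ) (t₀ := 0)
    (fun _ => hX.lipschitzOnWith) (fun u => ⟨(hΦ y (u + t)).comp_add_const u t, trivial⟩)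
    (fun u => ⟨hΦ (Φ t y) u, trivial⟩) (by simp [hΦ0])) s

theorem flow_neg_flow (hX : LipschitzWith K X) (hΦ0 : ∀ y, Φ 0 y = y)
    (hΦ : ∀ y s, HasDerivAt (fun u => Φ u y) (X (Φ s y)) s) (t : ℝ) (y : E) :
    Φ (-t) (Φ t y) = y := by
  rw [← flow_add hX hΦ0 hΦ, neg_add_cancel, hΦ0]

theorem eqOn_flow_integral_of_hasDerivAt_smul (hX : LipschitzWith K X) (hΦ0 : ∀ y, Φ 0 y = y)
    (hΦ : ∀ y s, HasDerivAt (fun u => Φ u y) (X (Φ s y)) s)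
    {a : ℝ → ℝ} (ha : Continuous a) {z : ℝ → E} {t₀ t₁ : ℝ}
    (hz : ∀ t ∈ Icc t₀ t₁, HasDerivAt z (a t • X (z t)) t) :
    EqOn z (fun t => Φ (∫ s in t₀..t, a s) (z t₀)) (Icc t₀ t₁) := by
  obtain ⟨C, hC⟩ := isCompact_Icc.exists_bound_of_continuousOn (s := Icc t₀ t₁) ha.continuousOn
  have hv : ∀ t ∈ Ico t₀ t₁, LipschitzOnWith (C.toNNReal * K) (fun y => a t • X y) univ :=
    fun t ht => (((lipschitzWith_smul (a t)).comp hX).weaken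
      (mul_le_mul_left (NNReal.le_toNNReal_of_coe_le (hC t (Ico_subset_Icc_self ht))) K)
      ).lipschitzOnWith
  have hclock : ∀ t, HasDerivAt (fun t => ∫ s in t₀..t, a s) (a t) t := fun t =>
    intervalIntegral.integral_hasDerivAt_right (ha.intervalIntegrable t₀ t)
      (ha.stronglyMeasurableAtFilter _ _) ha.continuousAt
  have hflow : ∀ t, HasDerivAt (fun t => Φ (∫ s in t₀..t, a s) (z t₀))
      (a t • X (Φ (∫ s in t₀..t, a s) (z t₀))) t := fun t =>
    (hΦ (z t₀) _).scomp t (hclock t)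
  refine ODE_solution_unique_of_mem_Icc_right hv
    (fun t ht => (hz t ht).continuousAt.continuousWithinAt)
    (fun t ht => (hz t (Ico_subset_Icc_self ht)).hasDerivWithinAt) (fun _ _ => trivial)
    (fun t _ => (hflow t).continuousAt.continuousWithinAt)
    (fun t _ => (hflow t).hasDerivWithinAt) (fun _ _ => trivial) ?_
  simp [hΦ0]

end Flow

theorem comp_eq_of_hasDerivAt_smul_of_tangent {E : Type*} [NormedAddCommGroup E]
    [NormedSpace ℝ E] {G : E → ℝ} {dG : E → E →L[ℝ] ℝ} {X : E → E}
    (hdG : ∀ y, HasFDerivAt G (dG y) y) (htangent : ∀ y, dG y (X y) = 0)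
    {a : ℝ → ℝ} {z : ℝ → E} {t₀ t₁ : ℝ}
    (hz : ∀ t ∈ Icc t₀ t₁, HasDerivAt z (a t • X (z t)) t) :
    ∀ t ∈ Icc t₀ t₁, G (z t) = G (z t₀) := by
  have hderiv : ∀ t ∈ Icc t₀ t₁, HasDerivAt (fun t => G (z t)) 0 t := fun t ht => by
    simpa [htangent, Function.comp_def] using (hdG (z t)).comp_hasDerivAt t (hz t ht)
  exact constant_of_has_deriv_right_zero
    (fun t ht => (hderiv t ht).continuousAt.continuousWithinAt)
    (fun t ht => (hderiv t (Ico_subset_Icc_self ht)).hasDerivWithinAt)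

theorem intervalIntegral_mul_eq_of_eq_on_support {χ f : ℝ → ℝ} {c a b : ℝ}
    (hf : ∀ t, χ t ≠ 0 → f t = c) :
    ∫ t in a..b, χ t * f t = (∫ t in a..b, χ t) * c := by
  have hpt : ∀ t, χ t * f t = χ t * c := fun t => by
    by_cases h : χ t = 0
    · simp [h]
    · rw [hf t h]
  simp_rw [hpt]
  exact intervalIntegral.integral_mul_const _ _

theorem leafwise_intersection_criterion_general
    {E : Type*} [NormedAddCommGroup E] [NormedSpace ℝ E]
    (H G₀ : E → ℝ) (XH XG : E → E) (XF : ℝ → E → E) (k : ℝ)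
    (hSigma : G₀ ⁻¹' {0} = H ⁻¹' {k})
    (hXGH : ∀ y, G₀ y = 0 → XG y = XH y)
    (dG : E → E →L[ℝ] ℝ) (hdG : ∀ y, HasFDerivAt G₀ (dG y) y)
    (hcons : ∀ y, dG y (XG y) = 0)
    (χ : ℝ → ℝ) (hχc : Continuous χ)
    (hχsupp : ∀ t, t ∉ Set.Ioo (0:ℝ) (1/2) → χ t = 0)
    (hχint : (∫ t in (0:ℝ)..1, χ t) = 1)
    (K : NNReal) (hXH_lip : LipschitzWith K XH)
    (Φ : ℝ → E → E) (hΦ0 : ∀ y, Φ 0 y = y)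
    (hΦ : ∀ y s, HasDerivAt (fun u => Φ u y) (XH (Φ s y)) s)
    (ψ : E → E)
    (hψ : ∀ z : ℝ → E, (∀ t ∈ Set.Icc (1/2 : ℝ) 1, HasDerivAt z (XF t (z t)) t) →
      ψ (z (1/2)) = z 1)
    (hF0 : ∀ t ∈ Set.Icc (0:ℝ) (1/2), ∀ y, XF t y = 0)
    (x : ℝ → E) (η : ℝ)
    (hx : ∀ t, HasDerivAt x ((η * χ t) • XG (x t) + XF t (x t)) t)
    (hxper : Function.Periodic x 1)
    (hconstraint : (∫ t in (0:ℝ)..1, χ t * G₀ (x t)) = 0) :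
    H (x (1/2)) = k ∧ ∃ s : ℝ, ψ (x (1/2)) = Φ s (x (1/2)) := by
  have hxG : ∀ t ∈ Icc (0:ℝ) (1/2), HasDerivAt x ((η * χ t) • XG (x t)) t := fun t ht => by
    simpa [hF0 t ht] using hx t
  have hG_const := comp_eq_of_hasDerivAt_smul_of_tangent hdG hcons hxG
  have hG_zero : ∀ t ∈ Icc (0:ℝ) (1/2), G₀ (x t) = 0 := by
    have hx0 : G₀ (x 0) = 0 := by
      rw [intervalIntegral_mul_eq_of_eq_on_support (c := G₀ (x 0)) (fun t ht =>
        hG_const t (Ioo_subset_Icc_self (not_imp_comm.mp (hχsupp t) ht))), hχint,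
        one_mul] at hconstraint
      exact hconstraint
    exact fun t ht => (hG_const t ht).trans hx0
  have hxH : ∀ t ∈ Icc (0:ℝ) (1/2), HasDerivAt x ((η * χ t) • XH (x t)) t := fun t ht => by
    simpa [hXGH _ (hG_zero t ht)] using hxG t ht
  have hx_half : x (1/2) = Φ (∫ s in (0:ℝ)..1/2, η * χ s) (x 0) :=
    eqOn_flow_integral_of_hasDerivAt_smul hXH_lip hΦ0 hΦ (hχc.const_mul η) hxH
      (right_mem_Icc.mpr (by norm_num))
  have hψx : ψ (x (1/2)) = x 1 := hψ x fun t ht => by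
    simpa [hχsupp t fun h => by linarith [h.2, ht.1]] using hx t
  refine ⟨hSigma.subset <| hG_zero _ (right_mem_Icc.mpr (by norm_num)), -∫ s in (0:ℝ)..1/2, η * χ s, ?_⟩
  rw [hψx, hxper.eq, hx_half, flow_neg_flow hXH_lip hΦ0 hΦ]

theorem leafwise_intersection_criterion
    {E : Type*} [NormedAddCommGroup E] [NormedSpace ℝ E]
    (H G₀ : E → ℝ) (XH XG : E → E) (XF : ℝ → E → E) (k : ℝ)
    (hSigma : G₀ ⁻¹' {0} = H ⁻¹' {k})
    (hXGH : ∀ y, G₀ y = 0 → XG y = XH y)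
    (dG : E → E →L[ℝ] ℝ) (hdG : ∀ y, HasFDerivAt G₀ (dG y) y)
    (hcons : ∀ y, dG y (XG y) = 0)
    (χ : ℝ → ℝ) (hχc : Continuous χ)
    (hχsupp : ∀ t, t ∉ Set.Ioo (0:ℝ) (1/2) → χ t = 0)
    (hχint : (∫ t in (0:ℝ)..1, χ t) = 1)
    (K : NNReal) (hXH_lip : LipschitzWith K XH) (hXG_cont : Continuous XG)
    (Φ : ℝ → E → E) (hΦ0 : ∀ y, Φ 0 y = y)
    (hΦ : ∀ y s, HasDerivAt (fun u => Φ u y) (XH (Φ s y)) s)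
    (ψ : E → E)
    (hψ : ∀ z : ℝ → E, (∀ t ∈ Set.Icc (1/2 : ℝ) 1, HasDerivAt z (XF t (z t)) t) →
      ψ (z (1/2)) = z 1)
    (hF0 : ∀ t ∈ Set.Icc (0:ℝ) (1/2), ∀ y, XF t y = 0)
    (x : ℝ → E) (η : ℝ)
    (hx : ∀ t, HasDerivAt x ((η * χ t) • XG (x t) + XF t (x t)) t)
    (hxper : Function.Periodic x 1)
    (hconstraint : (∫ t in (0:ℝ)..1, χ t * G₀ (x t)) = 0) :
    H (x (1/2)) = k ∧ ∃ s : ℝ, ψ (x (1/2)) = Φ s (x (1/2)) :=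
  leafwise_intersection_criterion_general H G₀ XH XG XF k hSigma hXGH dG hdG hcons χ hχc hχsupp
    hχint K hXH_lip Φ hΦ0 hΦ ψ hψ hF0 x η hx hxper hconstraint
end
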